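/- Let R be a ring and f : P → Q a quasi-isomorphism between dg-projective cochain complexes of R-modules. Then f is a homotopy equivalence: there exists a chain map g : Q → P such that g ∘ f is chain homotopic to the identity of P and f ∘ g is chain homotopic to the identity of Q. -/

import Mathlib

/-!
STATEMENT 1: Let R be a ring and f : P ⟶ Q a quasi-isomorphism between dg-projective
cochain complexes of R-modules. Then f is a homotopy equivalence: there exists a chain
map g : Q ⟶ P such that g ∘ f is chain homotopic to the identity of P and f ∘ g is
chain homotopic to the identity of Q.
-/

open CategoryTheory CategoryTheory.Limits

/-- A cochain complex of `R`-modules is dg-projective if each of its components is a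
projective `R`-module and every chain map from it to an acyclic complex is
null-homotopic. -/
def IsDGProjective {R : Type} [Ring R] (P : CochainComplex (ModuleCat R) ℤ) : Prop :=
  (∀ i : ℤ, Module.Projective R (P.X i)) ∧
  ∀ (C : CochainComplex (ModuleCat R) ℤ), (∀ i : ℤ, IsZero (C.homology i)) →
    ∀ g : P ⟶ C, Nonempty (Homotopy g 0)

lemma IsDGProjective.isKProjective {R : Type} [Ring R] {P : CochainComplex (ModuleCat R) ℤ}
    (hP : IsDGProjective P) : P.IsKProjective where
  nonempty_homotopy_zero f hL := hP.2 _ (fun i ↦ (hL i).isZero_homology) f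

theorem homotopyEquiv_of_quasiIso_of_dgProjective
    {R : Type} [Ring R] {P Q : CochainComplex (ModuleCat R) ℤ}
    (hP : IsDGProjective P) (hQ : IsDGProjective Q)
    (f : P ⟶ Q) (hf : QuasiIso f) :
    ∃ g : Q ⟶ P, Nonempty (Homotopy (f ≫ g) (𝟙 P)) ∧ Nonempty (Homotopy (g ≫ f) (𝟙 Q)) := by
  have := hP.isKProjective
  have := hQ.isKProjective
  obtain ⟨e, rfl⟩ := (CochainComplex.IsKProjective.quasiIso_iff f).1 hf
  exact ⟨e.inv, ⟨e.homotopyHomInvId⟩, ⟨e.homotopyInvHomId⟩⟩
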